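/- For x tending to infinity, the limit of Γ(x/2 + 1)/Γ(x/2) − (Γ((x+1)/2)/Γ(x/2))² equals 1/4. -/

import Mathlib

/-!
Write `r s = Γ (s + 1/2) / Γ s` and `h s = r s ^ 2 - (s - 1/4)`. Then `r s * r (s + 1/2) = s`,
and log-convexity of `Γ` gives `r s ^ 2 ≤ s`, whence `|h s| ≤ 1/4`. Squaring the functional
equation gives `h s * (s + 1/4 + h (s + 1/2)) + (s - 1/4) * h (s + 1/2) = 1/16`, so bounds
`-δ ≤ h ≤ 1/(16 s) + δ` at `s + 1/2` pass to `s` with `δ` shrunk by the factor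
`1 - 1/(4 s) ≤ √(s / (s + 1/2))`. These factors telescope: after `n` steps the slack is
`√(s / (s + n/2)) / 4 → 0`, so `0 ≤ h s ≤ 1/(16 s)`. The expression of the theorem is
`1/4 - h (x/2)`.
-/

open Real Filter Topology Set

lemma Gamma_add_half_sq_le {s : ℝ} (hs : 0 < s) :
    Gamma (s + 1 / 2) ^ 2 ≤ Gamma s * Gamma (s + 1) := by
  have hconv := convexOn_log_Gamma.2 (mem_Ioi.2 hs) (mem_Ioi.2 (by linarith : (0:ℝ) < s + 1))
    (by norm_num : (0:ℝ) ≤ 1 / 2) (by norm_num : (0:ℝ) ≤ 1 / 2) (by norm_num)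
  have hmid : 1 / 2 * s + 1 / 2 * (s + 1) = s + 1 / 2 := by ring
  simp only [Function.comp, smul_eq_mul, hmid] at hconv
  have h₁ := Gamma_pos_of_pos hs
  have h₂ := Gamma_pos_of_pos (by linarith : (0:ℝ) < s + 1)
  have h₃ := Gamma_pos_of_pos (by linarith : (0:ℝ) < s + 1 / 2)
  rw [← log_le_log_iff (by positivity) (by positivity), log_pow, log_mul h₁.ne' h₂.ne']
  push_cast
  linarith

noncomputable def gammaRatio (s : ℝ) : ℝ := Gamma (s + 1 / 2) / Gamma s

noncomputable def gammaRatioDefect (s : ℝ) : ℝ := gammaRatio s ^ 2 - (s - 1 / 4)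

lemma gammaRatio_sq_le {s : ℝ} (hs : 0 < s) : gammaRatio s ^ 2 ≤ s := by
  have hΓ := Gamma_pos_of_pos hs
  rw [gammaRatio, div_pow, div_le_iff₀ (by positivity)]
  have := Gamma_add_half_sq_le hs
  rw [Gamma_add_one hs.ne'] at this
  linarith

lemma gammaRatio_mul_gammaRatio_add_half {s : ℝ} (hs : 0 < s) :
    gammaRatio s * gammaRatio (s + 1 / 2) = s := by
  have h₁ := (Gamma_pos_of_pos hs).ne'
  have h₂ := (Gamma_pos_of_pos (by linarith : (0:ℝ) < s + 1 / 2)).ne'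
  rw [gammaRatio, gammaRatio, add_assoc, add_halves, Gamma_add_one hs.ne']
  field_simp

lemma gammaRatioDefect_identity {s : ℝ} (hs : 0 < s) :
    gammaRatioDefect s * (s + 1 / 4 + gammaRatioDefect (s + 1 / 2))
      + (s - 1 / 4) * gammaRatioDefect (s + 1 / 2) = 1 / 16 := by
  have h := congrArg (· ^ 2) (gammaRatio_mul_gammaRatio_add_half hs)
  simp only [mul_pow] at h
  simp only [gammaRatioDefect]
  linear_combination h

lemma gammaRatioDefect_mem_Icc_quarter {s : ℝ} (hs : 0 < s) :
    gammaRatioDefect s ∈ Icc (-(1 / 4)) (1 / 4) := by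
  simp only [gammaRatioDefect, mem_Icc]
  refine ⟨?_, by linarith [gammaRatio_sq_le hs]⟩
  have hprod : gammaRatio s ^ 2 * gammaRatio (s + 1 / 2) ^ 2 = s ^ 2 := by
    rw [← mul_pow, gammaRatio_mul_gammaRatio_add_half hs]
  have hle := mul_le_mul_of_nonneg_left (gammaRatio_sq_le (by linarith : (0:ℝ) < s + 1 / 2))
    (sq_nonneg (gammaRatio s))
  nlinarith

lemma mem_Icc_of_mul_add_mul_eq_one_div_sixteen {s δ a b : ℝ} (hs : 1 / 4 ≤ s) (hδ₀ : 0 ≤ δ)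
    (hδ : δ ≤ 1 / 4) (hab : a * (s + 1 / 4 + b) + (s - 1 / 4) * b = 1 / 16)
    (hb : b ∈ Icc (-δ) (1 / (16 * (s + 1 / 2)) + δ)) :
    a ∈ Icc (-((1 - 1 / (4 * s)) * δ)) (1 / (16 * s) + (1 - 1 / (4 * s)) * δ) := by
  obtain ⟨hb₁, hb₂⟩ := hb
  have hs₀ : 0 < s := by linarith
  set c := 1 - 1 / (4 * s) with hc_def
  have hc : c * s = s - 1 / 4 := by rw [hc_def]; field_simp
  have hc₀ : 0 ≤ c := by nlinarith
  constructor
  · have hq : (s - 1 / 4) * (1 / (16 * (s + 1 / 2))) ≤ 1 / 16 := by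
      rw [← mul_div_assoc, mul_one, div_le_div_iff₀ (by positivity) (by norm_num)]
      linarith
    have hlow : -((s - 1 / 4) * δ) ≤ a * (s + 1 / 4 + b) := by
      nlinarith [mul_le_mul_of_nonneg_left hb₂ (by linarith : (0:ℝ) ≤ s - 1 / 4)]
    by_contra! ha
    have ha₀ : a < 0 := by nlinarith
    nlinarith [mul_le_mul_of_nonpos_left (by linarith : s ≤ s + 1 / 4 + b) ha₀.le]
  · have hup : a * (s + 1 / 4 + b) ≤ 1 / 16 + (s - 1 / 4) * δ := by
      nlinarith [mul_le_mul_of_nonneg_left hb₁ (by linarith : (0:ℝ) ≤ s - 1 / 4)]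
    have hT : 1 / 16 + (s - 1 / 4) * δ ≤ (1 / (16 * s) + c * δ) * (s + 1 / 4 - δ) := by
      have key : (1 / (16 * s) + c * δ) * (s + 1 / 4 - δ) - (1 / 16 + (s - 1 / 4) * δ)
          = (1 / 4 - δ) ^ 2 / (4 * s) + δ * (1 / 4 - δ) := by
        rw [hc_def]; field_simp; ring
      nlinarith [div_nonneg (sq_nonneg (1 / 4 - δ)) (by positivity : (0:ℝ) ≤ 4 * s)]
    by_contra! ha
    have hT₀ : 0 ≤ 1 / (16 * s) + c * δ := by positivity
    nlinarith [mul_le_mul_of_nonneg_left (by linarith : s + 1 / 4 - δ ≤ s + 1 / 4 + b)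
      (by linarith : (0:ℝ) ≤ a)]

lemma one_sub_inv_le_sqrt_div_add_half {s : ℝ} (hs : 1 / 6 ≤ s) :
    1 - 1 / (4 * s) ≤ √(s / (s + 1 / 2)) := by
  refine (le_abs_self _).trans (abs_le_sqrt ?_)
  have hs₀ : 0 < s := by linarith
  rw [one_sub_div (by positivity), div_pow, div_le_div_iff₀ (by positivity) (by positivity)]
  nlinarith

lemma sqrt_div_add_half_mul_sqrt_div {s : ℝ} (hs : 0 < s) (t : ℝ) :
    √(s / (s + 1 / 2)) * √((s + 1 / 2) / (s + 1 / 2 + t)) = √(s / (s + 1 / 2 + t)) := by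
  rw [← sqrt_mul (by positivity), div_mul_div_cancel₀ (by positivity)]

lemma gammaRatioDefect_mem_Icc_sqrt (n : ℕ) {s : ℝ} (hs : 1 / 4 ≤ s) :
    gammaRatioDefect s ∈
      Icc (-(√(s / (s + n / 2)) / 4)) (1 / (16 * s) + √(s / (s + n / 2)) / 4) := by
  induction n generalizing s with
  | zero =>
    have hs₀ : 0 < s := by linarith
    have hquarter := gammaRatioDefect_mem_Icc_quarter hs₀
    simp only [CharP.cast_eq_zero, zero_div, add_zero, div_self hs₀.ne', sqrt_one]
    exact ⟨hquarter.1, by linarith [hquarter.2, (by positivity : 0 ≤ 1 / (16 * s))]⟩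
  | succ n ih =>
    have hs₀ : 0 < s := by linarith
    set δ := √((s + 1 / 2) / (s + 1 / 2 + n / 2)) / 4
    have hδ₀ : 0 ≤ δ := by positivity
    have hδ : δ ≤ 1 / 4 := by
      have : √((s + 1 / 2) / (s + 1 / 2 + n / 2)) ≤ 1 :=
        sqrt_le_one.2 (div_le_one_of_le₀ (by linarith [(by positivity : (0:ℝ) ≤ n / 2)])
          (by positivity))
      exact div_le_div_of_nonneg_right this (by norm_num)
    have hstep := mem_Icc_of_mul_add_mul_eq_one_div_sixteen hs hδ₀ hδ
      (gammaRatioDefect_identity hs₀) (by simpa only [add_assoc] using ih (by linarith))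
    have hcontract : (1 - 1 / (4 * s)) * δ ≤ √(s / (s + ↑(n + 1) / 2)) / 4 := by
      have henv : √(s / (s + ↑(n + 1) / 2)) / 4 = √(s / (s + 1 / 2)) * δ := by
        rw [mul_div_assoc', sqrt_div_add_half_mul_sqrt_div hs₀]
        push_cast; ring_nf
      rw [henv]
      exact mul_le_mul_of_nonneg_right (one_sub_inv_le_sqrt_div_add_half (by linarith)) hδ₀
    exact Icc_subset_Icc (by linarith) (by linarith) hstep

lemma tendsto_sqrt_div_add_nat_half {s : ℝ} :
    Tendsto (fun n : ℕ => √(s / (s + n / 2)) / 4) atTop (𝓝 0) := by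
  have hden : Tendsto (fun n : ℕ => s + (n : ℝ) / 2) atTop atTop :=
    tendsto_atTop_add_const_left _ s (tendsto_natCast_atTop_atTop.atTop_div_const (by norm_num))
  simpa using ((continuous_sqrt.tendsto 0).comp (tendsto_const_nhds.div_atTop hden)).div_const 4

lemma gammaRatioDefect_mem_Icc_zero_one_div {s : ℝ} (hs : 1 / 4 ≤ s) :
    gammaRatioDefect s ∈ Icc 0 (1 / (16 * s)) := by
  have hlim := tendsto_sqrt_div_add_nat_half (s := s)
  constructor
  · simpa using le_of_tendsto' hlim.neg fun n => (gammaRatioDefect_mem_Icc_sqrt n hs).1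
  · simpa using ge_of_tendsto' (hlim.const_add _) fun n => (gammaRatioDefect_mem_Icc_sqrt n hs).2

lemma tendsto_gammaRatioDefect_atTop : Tendsto gammaRatioDefect atTop (𝓝 0) := by
  refine tendsto_of_tendsto_of_tendsto_of_le_of_le' tendsto_const_nhds
    ((tendsto_const_nhds (x := (1 : ℝ))).div_atTop
      (tendsto_id.const_mul_atTop (by norm_num : (0:ℝ) < 16))) ?_ ?_
  all_goals filter_upwards [eventually_ge_atTop (1 / 4 : ℝ)] with s hs
  exacts [(gammaRatioDefect_mem_Icc_zero_one_div hs).1,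
    (gammaRatioDefect_mem_Icc_zero_one_div hs).2]

theorem gamma_ratio_diff_tendsto_quarter :
    Tendsto (fun x : ℝ =>
        Real.Gamma (x / 2 + 1) / Real.Gamma (x / 2)
          - (Real.Gamma ((x + 1) / 2) / Real.Gamma (x / 2)) ^ 2)
      atTop (nhds (1 / 4)) := by
  have hlim : Tendsto (fun x : ℝ => 1 / 4 - gammaRatioDefect (x / 2)) atTop (𝓝 (1 / 4)) := by
    simpa using tendsto_const_nhds.sub
      (tendsto_gammaRatioDefect_atTop.comp (tendsto_id.atTop_div_const (by norm_num : (0:ℝ) < 2)))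
  refine hlim.congr' ?_
  filter_upwards [eventually_gt_atTop 0] with x hx
  have hx₂ : 0 < x / 2 := by linarith
  rw [Gamma_add_one hx₂.ne', mul_div_cancel_right₀ _ (Gamma_pos_of_pos hx₂).ne',
    add_div, gammaRatioDefect, gammaRatio]
  ring
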